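/- arXiv:2010.08149 — 3 statements merged into one kernel-verified Lean document; each statement's English description precedes it below -/
import Mathlib

section
/- Continuous inf-sup condition: there exists β > 0 such that for all (s, v) ∈ ℚ × L²(Ω)^d one has sup_{q ∈ 𝔖, q ≠ 0} [ (s, j_ω⁺ q) + (v, div j_ω⁺ q) ] / ‖q‖_𝔖 ≥ β ( ‖s‖_{0,Ω} + ‖v‖_{0,Ω} ). -/
/-!
Abstract Hilbert-space model of the stress-based mixed formulation of Zener's
model in linear viscoelasticity (elastic/viscoelastic composite materials).

* `H`    models the tensor space `𝕃²(Ω) = L²(Ω)^{d×d}` (with the pair space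
         `H × H` modelling `𝔏²(Ω)`, resp. `𝔏²_V(Ω)` when the second component
         is restricted to `HV`);
* `U`    models the vector space `L²(Ω)^d`;
* `HV`   models `𝕃²(Ω_V)`, the tensors vanishing on the purely elastic part `Ω_E`;
* `Hdiv` models `ℍ(div, Ω)` and `dvg` the (row-wise) divergence operator;
* `mulω` models pointwise multiplication by the piecewise constant relaxation
         time `ω ≥ 0` and `mulωtinv` multiplication by `ω̃⁻¹`;
* `Hsym` models the symmetric tensors, `Q` the skew-symmetric tensors `ℚ`;
* `Ainv`, `Vinv` model the fourth order tensors `𝒜 = 𝒞⁻¹`, `𝒱 = (𝒟 - 𝒞)⁻¹`;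
* `mulρinv` models multiplication by `ρ⁻¹` (`ρ` the piecewise constant mass density);
* `ntr`  models the normal-trace duality pairing `(φ, τ) ↦ ⟨φ, τ n⟩_Γ`
         with `G` modelling `H^{1/2}(Γ)`.
-/

noncomputable section

open scoped RealInnerProductSpace
open Set Filter MeasureTheory

section Defs

variable {H : Type*} [NormedAddCommGroup H] [InnerProductSpace ℝ H]
variable {U : Type*} [NormedAddCommGroup U] [InnerProductSpace ℝ U]

/-- `j_ω⁺(η, τ) := η + ωτ`. -/
def jplus (mulω : H →L[ℝ] H) (q : H × H) : H := q.1 + mulω q.2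

/-- `j_ω(η, τ) := (η, ωτ)`. -/
def jomega (mulω : H →L[ℝ] H) (q : H × H) : H × H := (q.1, mulω q.2)

/-- `π₂(η, τ) := (0, τ)`. -/
def pi2 (q : H × H) : H × H := (0, q.2)

/-- the `𝔏²(Ω) = 𝕃² × 𝕃²` norm of a pair of tensor fields. -/
def pnorm (q : H × H) : ℝ := Real.sqrt (‖q.1‖ ^ 2 + ‖q.2‖ ^ 2)

/-- membership in `𝔖 = {q ∈ 𝔏²_V(Ω) : j_ω⁺ q ∈ ℍ(div, Ω)}`. -/
def memS (HV Hdiv : Submodule ℝ H) (mulω : H →L[ℝ] H) (q : H × H) : Prop :=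
  q.2 ∈ HV ∧ jplus mulω q ∈ Hdiv

/-- membership in `𝔖_sym = 𝔖 ∩ 𝔏²_sym(Ω)`. -/
def memSsym (HV Hdiv Hsym : Submodule ℝ H) (mulω : H →L[ℝ] H) (q : H × H) : Prop :=
  memS HV Hdiv mulω q ∧ jplus mulω q ∈ Hsym

/-- the `𝔖`-norm: `‖q‖²_𝔖 = ‖η‖² + ‖ωτ‖² + ‖div(η + ωτ)‖²`. -/
def Snorm (mulω : H →L[ℝ] H) (dvg : H →ₗ[ℝ] U) (q : H × H) : ℝ :=
  Real.sqrt (‖q.1‖ ^ 2 + ‖mulω q.2‖ ^ 2 + ‖dvg (jplus mulω q)‖ ^ 2)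

/-- the `ℍ(div, Ω)`-norm. -/
def hdivNorm (dvg : H →ₗ[ℝ] U) (τ : H) : ℝ := Real.sqrt (‖τ‖ ^ 2 + ‖dvg τ‖ ^ 2)

/-- the bilinear form `A(p, q) = (𝒜γ, η) + (𝒱ζ, τ)`. -/
def Abil (Ainv Vinv : H →L[ℝ] H) (p q : H × H) : ℝ :=
  ⟪Ainv p.1, q.1⟫ + ⟪Vinv p.2, q.2⟫

/-- the `ρ`-weighted inner product `(u, v)_ρ := (ρ⁻¹ u, v)`. -/
def rinner (mulρinv : U →L[ℝ] U) (u v : U) : ℝ := ⟪mulρinv u, v⟫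

/-- the energy functional
`ℰ(q)(t) = ½ A(j_ω q̇(t), j_ω q̇(t)) + ½ (div j_ω⁺ q(t), div j_ω⁺ q(t))_ρ`. -/
def energy (mulω : H →L[ℝ] H) (dvg : H →ₗ[ℝ] U) (Ainv Vinv : H →L[ℝ] H)
    (mulρinv : U →L[ℝ] U) (q q' : ℝ → H × H) (t : ℝ) : ℝ :=
  (1 / 2) * Abil Ainv Vinv (jomega mulω (q' t)) (jomega mulω (q' t)) +
  (1 / 2) * rinner mulρinv (dvg (jplus mulω (q t))) (dvg (jplus mulω (q t)))

/-- the `H¹(0,T; L²)`-norm of `F` (whose derivative is `F'`). -/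
def H1norm (T : ℝ) (F F' : ℝ → U) : ℝ :=
  Real.sqrt (∫ t in Ioc (0 : ℝ) T, (‖F t‖ ^ 2 + ‖F' t‖ ^ 2))

/-- the `H³(0,T; ·)`-norm of `g` (whose successive derivatives are `g'`, `g''`, `g'''`). -/
def H3norm {G : Type*} [NormedAddCommGroup G] (T : ℝ) (g g' g'' g''' : ℝ → G) : ℝ :=
  Real.sqrt (∫ t in Ioc (0 : ℝ) T,
    (‖g t‖ ^ 2 + ‖g' t‖ ^ 2 + ‖g'' t‖ ^ 2 + ‖g''' t‖ ^ 2))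

/-- membership in the discrete space
`𝔖_h = {q ∈ [P_k(T_h)]^{d×d} × [P_k^V(T_h)]^{d×d} : j_ω⁺ q ∈ W_h}`. -/
def memSh (Xh XhV Wh : Submodule ℝ H) (mulω : H →L[ℝ] H) (q : H × H) : Prop :=
  q.1 ∈ Xh ∧ q.2 ∈ XhV ∧ jplus mulω q ∈ Wh

/-- the solution concept for problem (★): `p ∈ W(𝔖_sym, 𝔖'_sym)` with
`d/dt A(j_ω ṗ + π₂ p, j_ω q) + (div j_ω⁺ p, div j_ω⁺ q)_ρ
   = -(F, div j_ω⁺ q)_ρ + ⟨g̈, (j_ω⁺ q) n⟩_Γ` for all `q ∈ 𝔖_sym`,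
together with the initial conditions `p(0) = p₀`, `ṗ(0) = p₁`. -/
def IsSolutionStar {G : Type*} [NormedAddCommGroup G] [InnerProductSpace ℝ G]
    (T : ℝ) (HV Hdiv Hsym : Submodule ℝ H) (mulω : H →L[ℝ] H) (dvg : H →ₗ[ℝ] U)
    (Ainv Vinv : H →L[ℝ] H) (mulρinv : U →L[ℝ] U)
    (ntr : H →ₗ[ℝ] G →ₗ[ℝ] ℝ) (F : ℝ → U) (g'' : ℝ → G)
    (p₀ p₁ : H × H) (p p' : ℝ → H × H) : Prop :=
  (∀ t : ℝ, HasDerivAt p (p' t) t) ∧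
  (∀ t ∈ Icc (0 : ℝ) T, memSsym HV Hdiv Hsym mulω (p t)) ∧
  p 0 = p₀ ∧ p' 0 = p₁ ∧
  ∀ q : H × H, memSsym HV Hdiv Hsym mulω q → ∀ t ∈ Icc (0 : ℝ) T,
    HasDerivAt
      (fun s => Abil Ainv Vinv (jomega mulω (p' s) + pi2 (p s)) (jomega mulω q))
      (-(rinner mulρinv (F t) (dvg (jplus mulω q))) + ntr (jplus mulω q) (g'' t) -
        rinner mulρinv (dvg (jplus mulω (p t))) (dvg (jplus mulω q))) t

/-- the solution concept for the extended formulation including the rotation `r`. -/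
def IsExtSolution {G : Type*} [NormedAddCommGroup G] [InnerProductSpace ℝ G]
    (T : ℝ) (HV Hdiv Q : Submodule ℝ H) (mulω : H →L[ℝ] H) (dvg : H →ₗ[ℝ] U)
    (Ainv Vinv : H →L[ℝ] H) (mulρinv : U →L[ℝ] U)
    (ntr : H →ₗ[ℝ] G →ₗ[ℝ] ℝ) (F : ℝ → U) (g'' : ℝ → G)
    (p₀ p₁ : H × H) (p p' : ℝ → H × H) (r : ℝ → H) : Prop :=
  (∀ t : ℝ, HasDerivAt p (p' t) t) ∧
  (∀ t ∈ Icc (0 : ℝ) T, memS HV Hdiv mulω (p t)) ∧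
  p 0 = p₀ ∧ p' 0 = p₁ ∧
  Continuous r ∧ (∀ t : ℝ, r t ∈ Q) ∧ r 0 = 0 ∧
  (∀ q : H × H, memS HV Hdiv mulω q → ∀ t ∈ Icc (0 : ℝ) T,
    HasDerivAt
      (fun s => Abil Ainv Vinv (jomega mulω (p' s) + pi2 (p s)) (jomega mulω q) +
        ⟪r s, jplus mulω q⟫)
      (-(rinner mulρinv (F t) (dvg (jplus mulω q))) + ntr (jplus mulω q) (g'' t) -
        rinner mulρinv (dvg (jplus mulω (p t))) (dvg (jplus mulω q))) t) ∧
  (∀ s ∈ Q, ∀ t ∈ Icc (0 : ℝ) T, ⟪s, jplus mulω (p t)⟫ = 0)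

/-- the discrete mixed problem defining the elliptic projector `Ξ_h p := pt`. -/
def IsDiscreteProj (Xh XhV Wh Qh : Submodule ℝ H) (Uh : Submodule ℝ U)
    (mulω : H →L[ℝ] H) (dvg : H →ₗ[ℝ] U) (mulρinv : U →L[ℝ] U)
    (p pt : H × H) (rt : H) (ut : U) : Prop :=
  memSh Xh XhV Wh mulω pt ∧ rt ∈ Qh ∧ ut ∈ Uh ∧
  (∀ q : H × H, memSh Xh XhV Wh mulω q →
    ⟪pt.1, q.1⟫ + ⟪pt.2, q.2⟫ + ⟪rt, jplus mulω q⟫ +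
      rinner mulρinv ut (dvg (jplus mulω q)) = ⟪p.1, q.1⟫ + ⟪p.2, q.2⟫) ∧
  (∀ s ∈ Qh, ∀ v ∈ Uh,
    ⟪s, jplus mulω pt⟫ + rinner mulρinv v (dvg (jplus mulω pt)) =
      ⟪s, jplus mulω p⟫ + rinner mulρinv v (dvg (jplus mulω p)))

end Defs

/-- continuous inf-sup condition (26): there exists `β > 0`
such that for all `(s, v) ∈ ℚ × L²(Ω)^d`,
`sup_{0 ≠ q ∈ 𝔖} [(s, j_ω⁺ q) + (v, div j_ω⁺ q)] / ‖q‖_𝔖 ≥ β (‖s‖₀ + ‖v‖₀)`.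

The hypothesis is the classical inf-sup condition for
`(τ, (s,v)) ↦ (s, τ) + (v, div τ)` on the pair `{ℍ(div, Ω), ℚ × L²(Ω)^d}`,
from which the conclusion follows via the embedding `ℍ(div,Ω) × {0} ↪ 𝔖`. -/
theorem continuous_infsup
    {H : Type*} [NormedAddCommGroup H] [InnerProductSpace ℝ H] [CompleteSpace H]
    {U : Type*} [NormedAddCommGroup U] [InnerProductSpace ℝ U] [CompleteSpace U]
    (HV Hdiv Q : Submodule ℝ H) (mulω : H →L[ℝ] H) (dvg : H →ₗ[ℝ] U)
    (hclassical : ∃ κ > 0, ∀ s ∈ Q, ∀ v : U,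
      κ * (‖s‖ + ‖v‖) ≤
        sSup {x : ℝ | ∃ τ ∈ Hdiv, τ ≠ 0 ∧
          x = (⟪s, τ⟫ + ⟪v, dvg τ⟫) / hdivNorm dvg τ}) :
    ∃ β > 0, ∀ s ∈ Q, ∀ v : U,
      β * (‖s‖ + ‖v‖) ≤
        sSup {x : ℝ | ∃ q : H × H, memS HV Hdiv mulω q ∧ q ≠ 0 ∧
          x = (⟪s, jplus mulω q⟫ + ⟪v, dvg (jplus mulω q)⟫) / Snorm mulω dvg q} := by
  obtain ⟨κ, hκ, hcl⟩ := hclassical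
  refine ⟨κ, hκ, fun s hs v => ?_⟩
  set Snew := {x : ℝ | ∃ q : H × H, memS HV Hdiv mulω q ∧ q ≠ 0 ∧
      x = (⟪s, jplus mulω q⟫ + ⟪v, dvg (jplus mulω q)⟫) / Snorm mulω dvg q} with hSnew
  set Sold := {x : ℝ | ∃ τ ∈ Hdiv, τ ≠ 0 ∧
      x = (⟪s, τ⟫ + ⟪v, dvg τ⟫) / hdivNorm dvg τ} with hSold
  -- the new set is bounded above
  have hbdd : BddAbove Snew := by
    refine ⟨Real.sqrt 2 * (‖s‖ + ‖v‖), ?_⟩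
    rintro x ⟨q, hq, hq0, rfl⟩
    have hN : Snorm mulω dvg q = Real.sqrt
        (‖q.1‖ ^ 2 + ‖mulω q.2‖ ^ 2 + ‖dvg (jplus mulω q)‖ ^ 2) := rfl
    have hNnn : 0 ≤ Snorm mulω dvg q := Real.sqrt_nonneg _
    rcases eq_or_lt_of_le hNnn with hN0 | hNpos
    · rw [← hN0, div_zero]
      positivity
    · rw [div_le_iff₀ hNpos]
      set N := Snorm mulω dvg q
      have h1 : ⟪s, jplus mulω q⟫ ≤ ‖s‖ * ‖jplus mulω q‖ := real_inner_le_norm _ _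
      have h2 : ⟪v, dvg (jplus mulω q)⟫ ≤ ‖v‖ * ‖dvg (jplus mulω q)‖ :=
        real_inner_le_norm _ _
      have h3 : ‖jplus mulω q‖ ≤ ‖q.1‖ + ‖mulω q.2‖ := norm_add_le _ _
      have hc : ‖dvg (jplus mulω q)‖ ≤ N := by
        rw [hN]
        have := Real.sqrt_le_sqrt (show ‖dvg (jplus mulω q)‖ ^ 2 ≤
            ‖q.1‖ ^ 2 + ‖mulω q.2‖ ^ 2 + ‖dvg (jplus mulω q)‖ ^ 2 by
              nlinarith [sq_nonneg ‖q.1‖, sq_nonneg ‖mulω q.2‖])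
        simpa [Real.sqrt_sq (norm_nonneg _)] using this
      have hab : ‖q.1‖ + ‖mulω q.2‖ ≤ Real.sqrt 2 * N := by
        have h4 : (‖q.1‖ + ‖mulω q.2‖) ^ 2 ≤
            2 * (‖q.1‖ ^ 2 + ‖mulω q.2‖ ^ 2 + ‖dvg (jplus mulω q)‖ ^ 2) := by
          nlinarith [sq_nonneg (‖q.1‖ - ‖mulω q.2‖), sq_nonneg (‖dvg (jplus mulω q)‖)]
        have h5 : ‖q.1‖ + ‖mulω q.2‖ ≤ Real.sqrt
            (2 * (‖q.1‖ ^ 2 + ‖mulω q.2‖ ^ 2 + ‖dvg (jplus mulω q)‖ ^ 2)) := by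
          have := Real.sqrt_le_sqrt h4
          simpa [Real.sqrt_sq (by linarith [norm_nonneg q.1, norm_nonneg (mulω q.2)] :
            (0:ℝ) ≤ ‖q.1‖ + ‖mulω q.2‖)] using this
        rwa [Real.sqrt_mul (by norm_num : (0:ℝ) ≤ 2), ← hN] at h5
      have hsqrt2 : (1 : ℝ) ≤ Real.sqrt 2 := by
        rw [show (1:ℝ) = Real.sqrt 1 by simp]
        exact Real.sqrt_le_sqrt (by norm_num)
      have hjs : ⟪s, jplus mulω q⟫ ≤ ‖s‖ * (Real.sqrt 2 * N) :=
        h1.trans (by nlinarith [norm_nonneg s, hab, h3])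
      have hjv : ⟪v, dvg (jplus mulω q)⟫ ≤ ‖v‖ * N :=
        h2.trans (by nlinarith [norm_nonneg v, hc])
      have hextra : 0 ≤ (Real.sqrt 2 - 1) * ‖v‖ * N :=
        mul_nonneg (mul_nonneg (by linarith) (norm_nonneg v)) hNnn
      nlinarith [hjs, hjv, hextra]
  -- the old set embeds into the new set via τ ↦ (τ, 0)
  have hsub : Sold ⊆ Snew := by
    rintro x ⟨τ, hτ, hτ0, rfl⟩
    refine ⟨(τ, 0), ⟨zero_mem _, ?_⟩, ?_, ?_⟩
    · simpa [jplus] using hτ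
    · simp [Prod.ext_iff, hτ0]
    · simp [jplus, Snorm, hdivNorm]
  have hκsv := hcl s hs v
  rcases Set.eq_empty_or_nonempty Sold with hemp | hne
  · -- Sold empty: then κ(‖s‖+‖v‖) ≤ 0 and sSup Snew ≥ 0
    rw [← hSold, hemp, Real.sSup_empty] at hκsv
    refine hκsv.trans ?_
    rcases Set.eq_empty_or_nonempty Snew with hemp2 | ⟨x, hx⟩
    · rw [hemp2, Real.sSup_empty]
    · have hnegx : -x ∈ Snew := by
        obtain ⟨q, ⟨hq1, hq2⟩, hq0, rfl⟩ := hx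
        refine ⟨-q, ⟨neg_mem hq1, ?_⟩, neg_ne_zero.mpr hq0, ?_⟩
        · have : jplus mulω (-q) = -(jplus mulω q) := by
            simp only [jplus, Prod.fst_neg, Prod.snd_neg, map_neg, neg_add]
          rw [this]; exact neg_mem hq2
        · have hj : jplus mulω (-q) = -(jplus mulω q) := by
            simp only [jplus, Prod.fst_neg, Prod.snd_neg, map_neg, neg_add]
          have hNneg : Snorm mulω dvg (-q) = Snorm mulω dvg q := by
            simp only [Snorm, hj, Prod.fst_neg, Prod.snd_neg, map_neg, norm_neg]
          rw [hj, hNneg, map_neg, inner_neg_right, inner_neg_right]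
          ring
      have h1 := le_csSup hbdd hx
      have h2 := le_csSup hbdd hnegx
      linarith
  · exact hκsv.trans (csSup_le_csSup hbdd hne hsub)
end
end

section
/- Discrete inf-sup condition: there exists β* > 0, independent of the mesh size h, such that for all (s, v) ∈ ℚ_h × U_h one has sup_{q ∈ 𝔖_h, q ≠ 0} [ (s, j_ω⁺ q) + (v, div j_ω⁺ q) ] / ‖q‖_𝔖 ≥ β* ( ‖s‖_{0,Ω} + ‖v‖_{0,Ω} ). -/
/-!
Abstract Hilbert-space model of the stress-based mixed formulation of Zener's
model in linear viscoelasticity (elastic/viscoelastic composite materials).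

* `H`    models the tensor space `𝕃²(Ω) = L²(Ω)^{d×d}` (with the pair space
         `H × H` modelling `𝔏²(Ω)`, resp. `𝔏²_V(Ω)` when the second component
         is restricted to `HV`);
* `U`    models the vector space `L²(Ω)^d`;
* `HV`   models `𝕃²(Ω_V)`, the tensors vanishing on the purely elastic part `Ω_E`;
* `Hdiv` models `ℍ(div, Ω)` and `dvg` the (row-wise) divergence operator;
* `mulω` models pointwise multiplication by the piecewise constant relaxation
         time `ω ≥ 0` and `mulωtinv` multiplication by `ω̃⁻¹`;
* `Hsym` models the symmetric tensors, `Q` the skew-symmetric tensors `ℚ`;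
* `Ainv`, `Vinv` model the fourth order tensors `𝒜 = 𝒞⁻¹`, `𝒱 = (𝒟 - 𝒞)⁻¹`;
* `mulρinv` models multiplication by `ρ⁻¹` (`ρ` the piecewise constant mass density);
* `ntr`  models the normal-trace duality pairing `(φ, τ) ↦ ⟨φ, τ n⟩_Γ`
         with `G` modelling `H^{1/2}(Γ)`.
-/

noncomputable section

open scoped RealInnerProductSpace
open Set Filter MeasureTheory

/-!
Extending a tensor `τ ∈ W_h` by zero, `q = (τ, 0)` lies in `𝔖_h`, has `j_ω⁺ q = τ` and
`‖q‖_𝔖 = ‖τ‖_{H(div)}`; so every quotient tested by the Arnold–Falk–Winther inf-sup condition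
is also tested over `𝔖_h`, and `β* = κ` works. Taking suprema needs the quotient set over `𝔖_h`
to be bounded (Cauchy–Schwarz) and to have a nonnegative supremum, which holds because it is
symmetric under `q ↦ -q`.
-/

lemma Real.sSup_nonneg_of_forall_neg_mem {B : Set ℝ} (hB : BddAbove B)
    (hneg : ∀ x ∈ B, -x ∈ B) : 0 ≤ sSup B := by
  rcases B.eq_empty_or_nonempty with rfl | ⟨x, hx⟩
  · rw [Real.sSup_empty]
  · linarith [le_csSup hB hx, le_csSup hB (hneg x hx)]

lemma Real.le_csSup_of_le_csSup_of_subset {A B : Set ℝ} {c : ℝ} (hc : c ≤ sSup A)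
    (hAB : A ⊆ B) (hB : BddAbove B) (hB₀ : 0 ≤ sSup B) : c ≤ sSup B := by
  rcases A.eq_empty_or_nonempty with rfl | hA
  · rw [Real.sSup_empty] at hc
    exact hc.trans hB₀
  · exact hc.trans (csSup_le_csSup hB hA hAB)

section Quotients

variable {H : Type*} [NormedAddCommGroup H] [InnerProductSpace ℝ H]
variable {U : Type*} [NormedAddCommGroup U] [InnerProductSpace ℝ U]
variable (mulω : H →L[ℝ] H) (dvg : H →ₗ[ℝ] U)

def infsupQuotients (P : H × H → Prop) (s : H) (v : U) : Set ℝ :=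
  {x | ∃ q : H × H, P q ∧ q ≠ 0 ∧
    x = (⟪s, jplus mulω q⟫ + ⟪v, dvg (jplus mulω q)⟫) / Snorm mulω dvg q}

lemma jplus_neg (q : H × H) : jplus mulω (-q) = -jplus mulω q := by
  simp only [jplus, Prod.fst_neg, Prod.snd_neg, map_neg, neg_add]

lemma Snorm_neg (q : H × H) : Snorm mulω dvg (-q) = Snorm mulω dvg q := by
  simp [Snorm, jplus_neg]

lemma Snorm_nonneg (q : H × H) : 0 ≤ Snorm mulω dvg q := Real.sqrt_nonneg _

lemma Snorm_mk_zero (τ : H) : Snorm mulω dvg (τ, 0) = hdivNorm dvg τ := by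
  simp [Snorm, jplus, hdivNorm]

lemma norm_fst_le_Snorm (q : H × H) : ‖q.1‖ ≤ Snorm mulω dvg q :=
  (Real.le_sqrt (norm_nonneg _) (by positivity)).2 (by
    linarith [sq_nonneg ‖mulω q.2‖, sq_nonneg ‖dvg (jplus mulω q)‖])

lemma norm_mulω_snd_le_Snorm (q : H × H) : ‖mulω q.2‖ ≤ Snorm mulω dvg q :=
  (Real.le_sqrt (norm_nonneg _) (by positivity)).2 (by
    linarith [sq_nonneg ‖q.1‖, sq_nonneg ‖dvg (jplus mulω q)‖])

lemma norm_dvg_jplus_le_Snorm (q : H × H) : ‖dvg (jplus mulω q)‖ ≤ Snorm mulω dvg q :=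
  (Real.le_sqrt (norm_nonneg _) (by positivity)).2 (by
    linarith [sq_nonneg ‖q.1‖, sq_nonneg ‖mulω q.2‖])

lemma norm_jplus_le_Snorm (q : H × H) : ‖jplus mulω q‖ ≤ 2 * Snorm mulω dvg q := by
  show ‖q.1 + mulω q.2‖ ≤ _
  linarith [norm_add_le q.1 (mulω q.2), norm_fst_le_Snorm mulω dvg q,
    norm_mulω_snd_le_Snorm mulω dvg q]

lemma inner_jplus_add_inner_dvg_le (s : H) (v : U) (q : H × H) :
    ⟪s, jplus mulω q⟫ + ⟪v, dvg (jplus mulω q)⟫ ≤ 2 * (‖s‖ + ‖v‖) * Snorm mulω dvg q := by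
  have hN := Snorm_nonneg mulω dvg q
  calc ⟪s, jplus mulω q⟫ + ⟪v, dvg (jplus mulω q)⟫
      ≤ ‖s‖ * ‖jplus mulω q‖ + ‖v‖ * ‖dvg (jplus mulω q)‖ :=
        add_le_add (real_inner_le_norm _ _) (real_inner_le_norm _ _)
    _ ≤ ‖s‖ * (2 * Snorm mulω dvg q) + ‖v‖ * Snorm mulω dvg q := by
        gcongr
        exacts [norm_jplus_le_Snorm mulω dvg q, norm_dvg_jplus_le_Snorm mulω dvg q]
    _ ≤ 2 * (‖s‖ + ‖v‖) * Snorm mulω dvg q := by nlinarith [norm_nonneg s, norm_nonneg v]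

lemma bddAbove_infsupQuotients (P : H × H → Prop) (s : H) (v : U) :
    BddAbove (infsupQuotients mulω dvg P s v) := by
  refine ⟨2 * (‖s‖ + ‖v‖), ?_⟩
  rintro _ ⟨q, -, -, rfl⟩
  rcases (Snorm_nonneg mulω dvg q).eq_or_lt with hN | hN
  · rw [← hN, div_zero]
    positivity
  · exact (div_le_iff₀ hN).2 (inner_jplus_add_inner_dvg_le mulω dvg s v q)

lemma neg_mem_infsupQuotients {P : H × H → Prop} (hP : ∀ q, P q → P (-q)) {s : H} {v : U}
    {x : ℝ} (hx : x ∈ infsupQuotients mulω dvg P s v) :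
    -x ∈ infsupQuotients mulω dvg P s v := by
  obtain ⟨q, hq, hq0, rfl⟩ := hx
  refine ⟨-q, hP q hq, neg_ne_zero.2 hq0, ?_⟩
  rw [Snorm_neg, jplus_neg, map_neg, inner_neg_right, inner_neg_right, ← neg_add, neg_div]

lemma sSup_infsupQuotients_nonneg {P : H × H → Prop} (hP : ∀ q, P q → P (-q)) (s : H)
    (v : U) : 0 ≤ sSup (infsupQuotients mulω dvg P s v) :=
  Real.sSup_nonneg_of_forall_neg_mem (bddAbove_infsupQuotients mulω dvg P s v)
    fun _ => neg_mem_infsupQuotients mulω dvg hP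

variable {mulω}

lemma memSh_neg {Xh XhV Wh : Submodule ℝ H} {q : H × H} (hq : memSh Xh XhV Wh mulω q) :
    memSh Xh XhV Wh mulω (-q) := by
  obtain ⟨h₁, h₂, hW⟩ := hq
  exact ⟨Xh.neg_mem h₁, XhV.neg_mem h₂, jplus_neg mulω q ▸ Wh.neg_mem hW⟩

lemma memSh_mk_zero {Xh XhV Wh : Submodule ℝ H} (hWX : Wh ≤ Xh) {τ : H} (hτ : τ ∈ Wh) :
    memSh Xh XhV Wh mulω (τ, 0) :=
  ⟨hWX hτ, XhV.zero_mem, by simpa [jplus] using hτ⟩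

end Quotients

theorem discrete_infsup_general
    {H : Type*} [NormedAddCommGroup H] [InnerProductSpace ℝ H]
    {U : Type*} [NormedAddCommGroup U] [InnerProductSpace ℝ U]
    (ι : Type*)
    (mulω : H →L[ℝ] H) (dvg : H →ₗ[ℝ] U)
    (Xh XhV Wh Qh : ι → Submodule ℝ H) (Uh : ι → Submodule ℝ U)
    (hWX : ∀ i, Wh i ≤ Xh i)
    -- uniform inf-sup condition of the Arnold–Falk–Winther element for {W_h, ℚ_h × U_h}
    (hAFW : ∃ κ > 0, ∀ i, ∀ s ∈ Qh i, ∀ v ∈ Uh i,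
      κ * (‖s‖ + ‖v‖) ≤
        sSup {x : ℝ | ∃ τ ∈ Wh i, τ ≠ 0 ∧
          x = (⟪s, τ⟫ + ⟪v, dvg τ⟫) / hdivNorm dvg τ}) :
    ∃ β > 0, ∀ i, ∀ s ∈ Qh i, ∀ v ∈ Uh i,
      β * (‖s‖ + ‖v‖) ≤
        sSup {x : ℝ | ∃ q : H × H, memSh (Xh i) (XhV i) (Wh i) mulω q ∧ q ≠ 0 ∧
          x = (⟪s, jplus mulω q⟫ + ⟪v, dvg (jplus mulω q)⟫) / Snorm mulω dvg q} := by
  obtain ⟨κ, hκ, hAFW⟩ := hAFW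
  refine ⟨κ, hκ, fun i s hs v hv => ?_⟩
  set P := memSh (Xh i) (XhV i) (Wh i) mulω
  have hsubset : {x : ℝ | ∃ τ ∈ Wh i, τ ≠ 0 ∧ x = (⟪s, τ⟫ + ⟪v, dvg τ⟫) / hdivNorm dvg τ} ⊆
      infsupQuotients mulω dvg P s v := by
    rintro _ ⟨τ, hτ, hτ0, rfl⟩
    refine ⟨(τ, 0), memSh_mk_zero (hWX i) hτ, by simpa using hτ0, ?_⟩
    rw [Snorm_mk_zero]
    simp [jplus]
  exact Real.le_csSup_of_le_csSup_of_subset (hAFW i s hs v hv) hsubset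
    (bddAbove_infsupQuotients mulω dvg P s v)
    (sSup_infsupQuotients_nonneg mulω dvg (P := P) (fun _ => memSh_neg) s v)

/-- discrete inf-sup condition (31): there exists `β* > 0`,
independent of the mesh size `h`, such that for all `(s, v) ∈ ℚ_h × U_h`,
`sup_{0 ≠ q ∈ 𝔖_h} [(s, j_ω⁺ q) + (v, div j_ω⁺ q)] / ‖q‖_𝔖 ≥ β* (‖s‖₀ + ‖v‖₀)`.

Here `ι` indexes the family of shape-regular meshes `T_h` compatible with the
partition of `Ω̄`; `Xh`, `XhV`, `Wh`, `Qh`, `Uh` model the finite element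
spaces `[P_k(T_h)]^{d×d}`, `[P_k^V(T_h)]^{d×d}`, `W_h`, `ℚ_h`, `U_h` of the
Arnold–Falk–Winther family (`k ≥ 1`), whose uniform inf-sup condition is the
hypothesis `hAFW`. -/
theorem discrete_infsup
    {H : Type*} [NormedAddCommGroup H] [InnerProductSpace ℝ H] [CompleteSpace H]
    {U : Type*} [NormedAddCommGroup U] [InnerProductSpace ℝ U] [CompleteSpace U]
    (ι : Type*)
    (HV Hdiv Q : Submodule ℝ H) (mulω : H →L[ℝ] H) (dvg : H →ₗ[ℝ] U)
    (Xh XhV Wh Qh : ι → Submodule ℝ H) (Uh : ι → Submodule ℝ U)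
    (hWdiv : ∀ i, Wh i ≤ Hdiv) (hWX : ∀ i, Wh i ≤ Xh i)
    (hXV : ∀ i, XhV i ≤ HV) (hQh : ∀ i, Qh i ≤ Q)
    -- uniform inf-sup condition of the Arnold–Falk–Winther element for {W_h, ℚ_h × U_h}
    (hAFW : ∃ κ > 0, ∀ i, ∀ s ∈ Qh i, ∀ v ∈ Uh i,
      κ * (‖s‖ + ‖v‖) ≤
        sSup {x : ℝ | ∃ τ ∈ Wh i, τ ≠ 0 ∧
          x = (⟪s, τ⟫ + ⟪v, dvg τ⟫) / hdivNorm dvg τ}) :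
    ∃ β > 0, ∀ i, ∀ s ∈ Qh i, ∀ v ∈ Uh i,
      β * (‖s‖ + ‖v‖) ≤
        sSup {x : ℝ | ∃ q : H × H, memSh (Xh i) (XhV i) (Wh i) mulω q ∧ q ≠ 0 ∧
          x = (⟪s, jplus mulω q⟫ + ⟪v, dvg (jplus mulω q)⟫) / Snorm mulω dvg q} :=
  discrete_infsup_general ι mulω dvg Xh XhV Wh Qh Uh hWX hAFW
end
end

section
/- Commuting diagram property of the elliptic projector: for every p ∈ 𝔖 one has ρ⁻¹ div j_ω⁺ (Ξ_h p) = U_h ( ρ⁻¹ div j_ω⁺ p ), where U_h is the L²-orthogonal projection onto the piecewise polynomial space [P_{k−1}(T_h)]^d. -/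
/-!
Abstract Hilbert-space model of the stress-based mixed formulation of Zener's
model in linear viscoelasticity (elastic/viscoelastic composite materials).

* `H`    models the tensor space `𝕃²(Ω) = L²(Ω)^{d×d}` (with the pair space
         `H × H` modelling `𝔏²(Ω)`, resp. `𝔏²_V(Ω)` when the second component
         is restricted to `HV`);
* `U`    models the vector space `L²(Ω)^d`;
* `HV`   models `𝕃²(Ω_V)`, the tensors vanishing on the purely elastic part `Ω_E`;
* `Hdiv` models `ℍ(div, Ω)` and `dvg` the (row-wise) divergence operator;
* `mulω` models pointwise multiplication by the piecewise constant relaxation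
         time `ω ≥ 0` and `mulωtinv` multiplication by `ω̃⁻¹`;
* `Hsym` models the symmetric tensors, `Q` the skew-symmetric tensors `ℚ`;
* `Ainv`, `Vinv` model the fourth order tensors `𝒜 = 𝒞⁻¹`, `𝒱 = (𝒟 - 𝒞)⁻¹`;
* `mulρinv` models multiplication by `ρ⁻¹` (`ρ` the piecewise constant mass density);
* `ntr`  models the normal-trace duality pairing `(φ, τ) ↦ ⟨φ, τ n⟩_Γ`
         with `G` modelling `H^{1/2}(Γ)`.
-/

noncomputable section

open scoped RealInnerProductSpace
open Set Filter MeasureTheory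

/-- commuting diagram property (37) of the elliptic
projector: for every `p ∈ 𝔖`,
`ρ⁻¹ div j_ω⁺ (Ξ_h p) = U_h (ρ⁻¹ div j_ω⁺ p)`,
where `U_h` (here `Uproj i`) is the `L²`-orthogonal projection onto
`[P_{k-1}(T_h)]^d`.

The hypotheses record that `Uproj i` is the orthogonal projection onto `U_h`,
that `div j_ω⁺ 𝔖_h ⊆ U_h`, and that multiplication by the piecewise constant
(mesh-compatible) `ρ⁻¹` is symmetric and preserves `U_h`. -/
theorem commuting_diagram
    {H : Type*} [NormedAddCommGroup H] [InnerProductSpace ℝ H] [CompleteSpace H]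
    {U : Type*} [NormedAddCommGroup U] [InnerProductSpace ℝ U] [CompleteSpace U]
    (ι : Type*)
    (HV Hdiv : Submodule ℝ H) (mulω : H →L[ℝ] H) (dvg : H →ₗ[ℝ] U)
    (mulρinv : U →L[ℝ] U)
    (Xh XhV Wh Qh : ι → Submodule ℝ H) (Uh : ι → Submodule ℝ U)
    (Uproj : ι → U →L[ℝ] U)
    -- `Uproj i` is the `L²`-orthogonal projection onto `U_h`
    (hUproj : ∀ i (v : U), Uproj i v ∈ Uh i ∧ ∀ w ∈ Uh i, ⟪v - Uproj i v, w⟫ = 0)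
    -- `div j_ω⁺ 𝔖_h ⊆ U_h`
    (hdivSh : ∀ i (q : H × H), memSh (Xh i) (XhV i) (Wh i) mulω q →
      dvg (jplus mulω q) ∈ Uh i)
    -- multiplication by `ρ⁻¹` preserves `U_h` (the mesh is compatible with the
    -- partition on which `ρ` is piecewise constant) and is symmetric
    (hρUh : ∀ i, ∀ v ∈ Uh i, mulρinv v ∈ Uh i)
    (hρsym : ∀ u v : U, ⟪mulρinv u, v⟫ = ⟪u, mulρinv v⟫) :
    ∀ i, ∀ p : H × H, memS HV Hdiv mulω p →
      ∀ (pt : H × H) (rt : H) (ut : U),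
        IsDiscreteProj (Xh i) (XhV i) (Wh i) (Qh i) (Uh i) mulω dvg mulρinv p pt rt ut →
        mulρinv (dvg (jplus mulω pt)) = Uproj i (mulρinv (dvg (jplus mulω p))) := by
  intro i p _hp pt rt ut hproj
  obtain ⟨hmem, _hrt, _hut, _heq1, heq2⟩ := hproj
  set a := mulρinv (dvg (jplus mulω pt)) with ha
  set b := mulρinv (dvg (jplus mulω p)) with hb
  have haUh : a ∈ Uh i := hρUh i _ (hdivSh i pt hmem)
  obtain ⟨hPb, hPorth⟩ := hUproj i b
  -- for every w ∈ Uh i, ⟪w, a⟫ = ⟪w, b⟫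
  have key : ∀ w ∈ Uh i, ⟪w, a⟫ = ⟪w, b⟫ := by
    intro w hw
    have := heq2 0 (zero_mem _) w hw
    simp only [inner_zero_left, zero_add, rinner] at this
    rw [ha, hb, ← hρsym, ← hρsym]
    exact this
  have hdiff : a - Uproj i b ∈ Uh i := sub_mem haUh hPb
  have hz : ⟪a - Uproj i b, a - Uproj i b⟫ = 0 := by
    have h1 := key _ hdiff
    have h2 := hPorth _ hdiff
    rw [real_inner_comm, inner_sub_right] at h2
    rw [inner_sub_right, h1]
    linarith
  exact sub_eq_zero.mp (inner_self_eq_zero.mp hz)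
end
end
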